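/- Let K/F be a finite cyclic Galois extension of degree n with Gal(K/F)=⟨σ⟩ and R = K[t;σ]. Suppose f ∈ R satisfies gcrd(f,t) = 1 and its minimal central left multiple h(t) = ĥ(t^n) has ĥ ∈ F[x] irreducible. Then f factors as f = f₁⋯f_r with each f_i irreducible in R and any two of the f_i similar (i.e. R/Rf_i ≅ R/Rf_j as left R-modules). -/

import Mathlib

/-!
Degree and a right division algorithm make `R = K[t;σ]` a domain whose left ideals are
principal, so a degree induction factors `f` into irreducibles and `R/Rp` is a simple module
for every irreducible `p`. Since `h = ĥ(t^n)` is central, each factor `p` of `f` divides it on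
both sides, `h = c p = p c`.

The key fact is that `Rh` is a maximal two-sided ideal. If `Rd ⊇ Rh` is two-sided with `d`
monic, comparing `d a = a' d` and `d t = w d` coefficientwise shows that `d` commutes with `K`
and `t`; here `d(0) ≠ 0` is used, and it comes from `ĥ(0) ≠ 0`, which is where `gcrd(f,t) = 1`
enters. Hence `d = p(t^n)` with `p ∣ ĥ` in `F[x]`, and `p = ĥ` or `p = 1`.

The annihilator of `R/Rq` is a proper two-sided ideal containing `h`, hence equal to `Rh`. It
contains `p c = h` but not `c`, so `x ↦ x c m` (for suitable `m`) is a nonzero map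
`R/Rp → R/Rq` between simple modules, an isomorphism by Schur's lemma.
-/

open Polynomial

section Ring

variable {R : Type*} [Ring R]

lemma mul_comm_of_mul_mem_center [NoZeroDivisors R] {u v : R} (h : u * v ∈ Subring.center R) :
    v * u = u * v := by
  rcases eq_or_ne v 0 with rfl | hv
  · rw [zero_mul, mul_zero]
  refine mul_right_cancel₀ hv ?_
  rw [mul_assoc, Subring.mem_center_iff.mp h v]

lemma mem_span_of_mem_prod [NoZeroDivisors R] {h g x : R} {l : List R}
    (hh : h ∈ Subring.center R) (hg : h = g * l.prod) (hx : x ∈ l) :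
    h ∈ Submodule.span R {x} := by
  obtain ⟨l₁, l₂, rfl⟩ := List.append_of_mem hx
  rw [List.prod_append, List.prod_cons, ← mul_assoc, ← mul_assoc] at hg
  rw [hg] at hh ⊢
  rw [← mul_comm_of_mul_mem_center hh, ← mul_assoc]
  exact Submodule.mem_span_singleton.mpr ⟨_, rfl⟩

lemma mem_annihilator_quotient_of_mem_center {h z : R} (hh : h ∈ Subring.center R)
    (hz : h ∈ Submodule.span R {z}) :
    h ∈ Module.annihilator R (R ⧸ Submodule.span R {z}) := by
  refine Module.mem_annihilator.mpr fun m => ?_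
  induction m using Submodule.Quotient.induction_on with
  | _ r =>
  rw [← Submodule.Quotient.mk_smul, Submodule.Quotient.mk_eq_zero, smul_eq_mul,
    ← Subring.mem_center_iff.mp hh r]
  exact Submodule.smul_mem _ r hz

lemma annihilator_quotient_ne_top {J : Ideal R} (hJ : J ≠ ⊤) :
    Module.annihilator R (R ⧸ J) ≠ ⊤ := fun h => hJ <| by
  have h1 := Module.mem_annihilator.mp (h ▸ Submodule.mem_top : (1 : R) ∈ _)
    (Submodule.Quotient.mk 1)
  rw [← Submodule.Quotient.mk_smul, Submodule.Quotient.mk_eq_zero, smul_eq_mul, one_mul] at h1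
  exact J.eq_top_of_isUnit_mem h1 isUnit_one

lemma isCoatom_span_singleton_of_irreducible [IsDomain R] [IsPrincipalIdealRing R] {p : R}
    (hp : Irreducible p) : IsCoatom (Submodule.span R {p}) := by
  refine ⟨fun htop => hp.not_isUnit ?_, fun J hJ => ?_⟩
  · obtain ⟨c, hc⟩ :=
      Submodule.mem_span_singleton.mp (htop ▸ Submodule.mem_top : (1 : R) ∈ _)
    exact IsUnit.of_mul_eq_one_right c hc
  obtain ⟨d, rfl⟩ := (IsPrincipalIdealRing.principal J).principal
  obtain ⟨w, hw⟩ := Submodule.mem_span_singleton.mp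
    (hJ.le (Submodule.mem_span_singleton_self p))
  rcases hp.isUnit_or_isUnit hw.symm with ⟨u, rfl⟩ | hd
  · refine (hJ.not_ge (Submodule.span_le.mpr ?_)).elim
    rw [Set.singleton_subset_iff, SetLike.mem_coe, Submodule.mem_span_singleton]
    refine ⟨↑u⁻¹, ?_⟩
    rw [← hw, smul_eq_mul, smul_eq_mul, ← mul_assoc, Units.inv_mul, one_mul]
  · exact Ideal.eq_top_of_isUnit_mem _ (Submodule.mem_span_singleton_self d) hd

lemma nonempty_linearEquiv_of_mul_mem_annihilator {M : Type*} [AddCommGroup M] [Module R M]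
    [IsSimpleModule R M] {a b : R} [IsSimpleModule R (R ⧸ Submodule.span R {a})]
    (hab : a * b ∈ Module.annihilator R M) (hb : b ∉ Module.annihilator R M) :
    Nonempty ((R ⧸ Submodule.span R {a}) ≃ₗ[R] M) := by
  obtain ⟨m, hm⟩ : ∃ m : M, b • m ≠ 0 := by simpa [Module.mem_annihilator] using hb
  have hker : Submodule.span R {a} ≤ LinearMap.ker (LinearMap.toSpanSingleton R M (b • m)) := by
    rw [Submodule.span_le, Set.singleton_subset_iff, SetLike.mem_coe, LinearMap.mem_ker,
      LinearMap.toSpanSingleton_apply, smul_smul]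
    exact Module.mem_annihilator.mp hab m
  set φ := (Submodule.span R {a}).liftQ _ hker
  have hφ : φ ≠ 0 := fun h0 => hm <| by
    simpa [φ] using LinearMap.congr_fun h0 (Submodule.Quotient.mk 1)
  exact ⟨LinearEquiv.ofBijective φ (LinearMap.bijective_of_ne_zero hφ)⟩

end Ring

section Galois

variable {F K : Type*} [Field F] [Field K] [Algebra F K] [IsGalois F K] {σ : K ≃ₐ[F] K}

lemma orderOf_eq_finrank_of_forall_mem_zpowers [FiniteDimensional F K]
    (hσ : ∀ τ : K ≃ₐ[F] K, τ ∈ Subgroup.zpowers σ) :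
    orderOf σ = Module.finrank F K := by
  rw [orderOf_eq_card_of_forall_mem_zpowers hσ, IsGalois.card_aut_eq_finrank]

lemma mem_range_algebraMap_of_forall_mem_zpowers
    (hσ : ∀ τ : K ≃ₐ[F] K, τ ∈ Subgroup.zpowers σ) {a : K} (ha : σ a = a) :
    a ∈ Set.range (algebraMap F K) :=
  (InfiniteGalois.mem_range_algebraMap_iff_fixed a).mpr fun τ =>
    (Subgroup.zpowers_le (H := MulAction.stabilizer _ a)).mpr ha (hσ τ)

end Galois

lemma Polynomial.eq_X_of_irreducible_of_coeff_zero_eq_zero {A : Type*} [CommRing A] [IsDomain A]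
    {p : A[X]} (hm : p.Monic) (hirr : Irreducible p) (h0 : p.coeff 0 = 0) : p = X :=
  eq_of_monic_of_associated hm monic_X
    (irreducible_X.associated_of_dvd hirr (X_dvd_iff.mpr h0)).symm

lemma Finsupp.sum_single_add_apply {M N : Type*} [Zero M] [AddCommMonoid N]
    (f : ℕ →₀ M) (g : ℕ → M → N) (hg : ∀ i, g i 0 = 0) (j k : ℕ) :
    (f.sum fun i b => Finsupp.single (i + j) (g i b)) (k + j) = g k (f k) := by
  classical
  simp only [Finsupp.sum_apply, Finsupp.single_apply, add_left_inj, Finsupp.sum_ite_eq']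
  split_ifs with h
  · rfl
  · rw [Finsupp.notMem_support_iff.mp h, hg]

lemma Finsupp.sum_single_add_apply_of_lt {M N : Type*} [Zero M] [AddCommMonoid N]
    (f : ℕ →₀ M) (g : ℕ → M → N) {j k : ℕ} (hk : k < j) :
    (f.sum fun i b => Finsupp.single (i + j) (g i b)) k = 0 := by
  classical
  rw [Finsupp.sum_apply]
  exact Finset.sum_eq_zero fun i _ => Finsupp.single_eq_of_ne (by omega)

structure IsSkewPolynomialRing {F K R : Type*} [Field F] [Field K] [Algebra F K] [Ring R]
    (σ : K ≃ₐ[F] K) (ι : K →+* R) (t : R) (coeff : R →+ (ℕ →₀ K)) : Prop where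
  t_mul : ∀ a : K, t * ι a = ι (σ a) * t
  coeff_monomial : ∀ (a : K) (i : ℕ), coeff (ι a * t ^ i) = Finsupp.single i a
  sum_coeff : ∀ x : R, (coeff x).sum (fun i a => ι a * t ^ i) = x

noncomputable def evalTPow {F K R : Type*} [Field F] [Field K] [Algebra F K] [Ring R]
    (ι : K →+* R) (t : R) (n : ℕ) (p : F[X]) : R :=
  p.eval₂ (ι.comp (algebraMap F K)) (t ^ n)

lemma evalTPow_eq_sum {F K R : Type*} [Field F] [Field K] [Algebra F K] [Ring R]
    (ι : K →+* R) (t : R) (n : ℕ) (p : F[X]) :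
    evalTPow ι t n p = p.sum fun k a => ι (algebraMap F K a) * t ^ (n * k) := by
  simp only [evalTPow, eval₂_eq_sum, RingHom.comp_apply, pow_mul]

namespace IsSkewPolynomialRing

variable {F K R : Type*} [Field F] [Field K] [Algebra F K] [Ring R]
  {σ : K ≃ₐ[F] K} {ι : K →+* R} {t : R} {coeff : R →+ (ℕ →₀ K)} {n : ℕ}

-- As for `Polynomial.natDegree`, `deg coeff 0 = 0`.
noncomputable def deg (coeff : R →+ (ℕ →₀ K)) (x : R) : ℕ := (coeff x).support.sup id

lemma le_deg {x : R} {k : ℕ} (h : coeff x k ≠ 0) : k ≤ deg coeff x :=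
  Finset.le_sup (f := id) (Finsupp.mem_support_iff.mpr h)

lemma coeff_eq_zero_of_deg_lt {x : R} {k : ℕ} (h : deg coeff x < k) : coeff x k = 0 :=
  not_ne_iff.mp fun hk => (le_deg hk).not_gt h

variable (P : IsSkewPolynomialRing σ ι t coeff)
include P

lemma coeff_injective : Function.Injective coeff := fun x y hxy => by
  rw [← P.sum_coeff x, ← P.sum_coeff y, hxy]

lemma coeff_iota (a : K) : coeff (ι a) = Finsupp.single 0 a := by
  simpa using P.coeff_monomial a 0

lemma coeff_t : coeff t = Finsupp.single 1 1 := by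
  simpa using P.coeff_monomial 1 1

lemma coeff_one : coeff (1 : R) = Finsupp.single 0 1 := by
  simpa using P.coeff_iota 1

lemma t_pow_mul (i : ℕ) (a : K) : t ^ i * ι a = ι ((σ ^ i) a) * t ^ i := by
  induction i generalizing a with
  | zero => simp
  | succ i ih =>
    rw [pow_succ, mul_assoc, P.t_mul, ← mul_assoc, ih, mul_assoc, ← pow_succ, pow_succ σ]
    rfl

lemma coeff_mul (x y : R) :
    coeff (x * y) = (coeff x).sum fun i a => (coeff y).sum fun j b =>
      Finsupp.single (i + j) (a * (σ ^ i) b) := by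
  conv_lhs => rw [← P.sum_coeff x, ← P.sum_coeff y]
  rw [Finsupp.sum_mul, map_finsuppSum]
  refine Finsupp.sum_congr fun i _ => ?_
  rw [Finsupp.mul_sum, map_finsuppSum]
  refine Finsupp.sum_congr fun j _ => ?_
  rw [mul_assoc, ← mul_assoc (t ^ i), P.t_pow_mul, mul_assoc, ← pow_add, ← mul_assoc,
    ← map_mul, P.coeff_monomial]

lemma coeff_mul_apply (x y : R) (k : ℕ) :
    coeff (x * y) k = ∑ i ∈ (coeff x).support, ∑ j ∈ (coeff y).support,
      if i + j = k then coeff x i * (σ ^ i) (coeff y j) else 0 := by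
  simp only [P.coeff_mul, Finsupp.sum, Finset.sum_apply', Finsupp.single_apply]

lemma coeff_mul_monomial (x : R) (a : K) (j : ℕ) :
    coeff (x * (ι a * t ^ j)) =
      (coeff x).sum fun i b => Finsupp.single (i + j) (b * (σ ^ i) a) := by
  rw [P.coeff_mul, P.coeff_monomial]
  exact Finsupp.sum_congr fun i _ => Finsupp.sum_single_index (by simp)

lemma coeff_monomial_mul (a : K) (i : ℕ) (x : R) :
    coeff (ι a * t ^ i * x) =
      (coeff x).sum fun j b => Finsupp.single (j + i) (a * (σ ^ i) b) := by
  rw [P.coeff_mul, P.coeff_monomial, Finsupp.sum_single_index (by simp)]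
  simp only [add_comm i]

lemma coeff_iota_mul (a : K) (x : R) (k : ℕ) : coeff (ι a * x) k = a * coeff x k := by
  have h := congr($(P.coeff_monomial_mul a 0 x) (k + 0))
  rw [Finsupp.sum_single_add_apply _ _ (fun _ => by simp)] at h
  simpa using h

lemma coeff_mul_iota (x : R) (a : K) (k : ℕ) : coeff (x * ι a) k = coeff x k * (σ ^ k) a := by
  have h := congr($(P.coeff_mul_monomial x a 0) (k + 0))
  rw [Finsupp.sum_single_add_apply _ _ (fun _ => by simp)] at h
  simpa using h

lemma coeff_mul_t_succ (x : R) (k : ℕ) : coeff (x * t) (k + 1) = coeff x k := by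
  have h := congr($(P.coeff_mul_monomial x 1 1) (k + 1))
  rw [Finsupp.sum_single_add_apply _ _ (fun _ => by simp)] at h
  simpa using h

lemma coeff_mul_t_zero (x : R) : coeff (x * t) 0 = 0 := by
  have h := congr($(P.coeff_mul_monomial x 1 1) 0)
  rwa [Finsupp.sum_single_add_apply_of_lt _ _ Nat.one_pos, pow_one, map_one, one_mul] at h

lemma coeff_t_mul_succ (x : R) (k : ℕ) : coeff (t * x) (k + 1) = σ (coeff x k) := by
  have h := congr($(P.coeff_monomial_mul 1 1 x) (k + 1))
  rw [Finsupp.sum_single_add_apply _ _ (fun _ => by simp)] at h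
  simpa using h

lemma coeff_deg_ne_zero {x : R} (hx : x ≠ 0) : coeff x (deg coeff x) ≠ 0 := by
  have hne : (coeff x).support.Nonempty :=
    Finsupp.support_nonempty_iff.mpr ((map_ne_zero_iff coeff P.coeff_injective).mpr hx)
  obtain ⟨k, hk, hsup⟩ := Finset.exists_mem_eq_sup _ hne id
  rw [deg, hsup]
  exact Finsupp.mem_support_iff.mp hk

lemma deg_lt_of_forall_coeff_eq_zero {x : R} {d : ℕ} (hx : x ≠ 0)
    (h : ∀ k, d ≤ k → coeff x k = 0) : deg coeff x < d :=
  not_le.mp fun hd => P.coeff_deg_ne_zero hx (h _ hd)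

lemma coeff_mul_of_deg_add_lt {x y : R} {k : ℕ} (hk : deg coeff x + deg coeff y < k) :
    coeff (x * y) k = 0 := by
  rw [P.coeff_mul_apply]
  refine Finset.sum_eq_zero fun i hi => Finset.sum_eq_zero fun j hj => if_neg fun hij => ?_
  have := le_deg (Finsupp.mem_support_iff.mp hi)
  have := le_deg (Finsupp.mem_support_iff.mp hj)
  omega

lemma coeff_mul_deg_add (x y : R) :
    coeff (x * y) (deg coeff x + deg coeff y) =
      coeff x (deg coeff x) * (σ ^ deg coeff x) (coeff y (deg coeff y)) := by
  rw [P.coeff_mul_apply, Finset.sum_eq_single (deg coeff x), Finset.sum_eq_single (deg coeff y),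
    if_pos rfl]
  · exact fun j _ hj => if_neg (by omega)
  · intro hy; simp [Finsupp.notMem_support_iff.mp hy]
  · refine fun i hi hix => Finset.sum_eq_zero fun j hj => if_neg fun hij => ?_
    have := le_deg (Finsupp.mem_support_iff.mp hi)
    have := le_deg (Finsupp.mem_support_iff.mp hj)
    omega
  · intro hx
    rw [Finsupp.notMem_support_iff.mp hx]
    simp

lemma coeff_mul_zero (x y : R) : coeff (x * y) 0 = coeff x 0 * coeff y 0 := by
  rw [P.coeff_mul_apply, Finset.sum_eq_single 0, Finset.sum_eq_single 0, if_pos rfl, pow_zero,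
    AlgEquiv.one_apply]
  · exact fun j _ hj => if_neg (by omega)
  · intro hy; simp [Finsupp.notMem_support_iff.mp hy]
  · exact fun i _ hi => Finset.sum_eq_zero fun j _ => if_neg (by omega)
  · intro hx
    rw [Finsupp.notMem_support_iff.mp hx]
    simp

lemma coeff_mul_deg_add_ne_zero {x y : R} (hx : x ≠ 0) (hy : y ≠ 0) :
    coeff (x * y) (deg coeff x + deg coeff y) ≠ 0 := by
  rw [P.coeff_mul_deg_add]
  exact mul_ne_zero (P.coeff_deg_ne_zero hx)
    ((map_ne_zero_iff _ (σ ^ _).injective).mpr (P.coeff_deg_ne_zero hy))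

lemma deg_mul {x y : R} (hx : x ≠ 0) (hy : y ≠ 0) :
    deg coeff (x * y) = deg coeff x + deg coeff y := by
  refine le_antisymm (Finset.sup_le fun k hk => ?_) (le_deg (P.coeff_mul_deg_add_ne_zero hx hy))
  exact not_lt.mp fun hlt => Finsupp.mem_support_iff.mp hk (P.coeff_mul_of_deg_add_lt hlt)

lemma isDomain : IsDomain R := by
  have : Nontrivial R := ⟨⟨1, 0, fun h => one_ne_zero
    (Finsupp.single_eq_zero.mp (by rw [← P.coeff_one, h, map_zero]))⟩⟩
  have : NoZeroDivisors R := ⟨fun {x y} hxy => by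
    by_contra! h
    exact P.coeff_mul_deg_add_ne_zero h.1 h.2 (by rw [hxy, map_zero, Finsupp.zero_apply])⟩
  exact NoZeroDivisors.to_isDomain R

lemma deg_iota (a : K) : deg coeff (ι a) = 0 :=
  Nat.le_zero.mp (Finset.sup_le fun k hk => by
    rw [P.coeff_iota] at hk
    exact (Finset.mem_singleton.mp (Finsupp.support_single_subset hk)).le)

lemma t_ne_zero : t ≠ 0 := fun h => one_ne_zero
  (Finsupp.single_eq_zero.mp (by rw [← P.coeff_t, h, map_zero]))

lemma deg_t : deg coeff t = 1 := by
  rw [deg, P.coeff_t, Finsupp.support_single _ one_ne_zero, Finset.sup_singleton, id]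

lemma eq_iota_of_deg_eq_zero {x : R} (h : deg coeff x = 0) : x = ι (coeff x 0) := by
  refine P.coeff_injective (Finsupp.ext fun k => ?_)
  rw [P.coeff_iota, Finsupp.single_apply]
  split_ifs with hk
  · rw [hk]
  · exact coeff_eq_zero_of_deg_lt (by omega)

lemma isUnit_iff_deg_eq_zero {x : R} (hx : x ≠ 0) : IsUnit x ↔ deg coeff x = 0 := by
  have := P.isDomain
  constructor
  · rintro ⟨u, rfl⟩
    have h := P.deg_mul u.ne_zero (u⁻¹).ne_zero
    rw [Units.mul_inv, ← map_one ι, P.deg_iota] at h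
    omega
  · intro h
    rw [P.eq_iota_of_deg_eq_zero h] at hx ⊢
    exact (IsUnit.mk0 _ fun h0 => hx (by rw [h0, map_zero])).map ι

lemma exists_coeff_sub_mul_eq_zero (x : R) {y : R} (hy : y ≠ 0)
    (hxy : deg coeff y ≤ deg coeff x) :
    ∃ m : R, ∀ k, deg coeff x ≤ k → coeff (x - m * y) k = 0 := by
  set e := deg coeff x - deg coeff y
  set c := coeff x (deg coeff x) * ((σ ^ e) (coeff y (deg coeff y)))⁻¹
  have hc : ((σ ^ e) (coeff y (deg coeff y))) ≠ 0 :=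
    (map_ne_zero_iff _ (σ ^ e).injective).mpr (P.coeff_deg_ne_zero hy)
  refine ⟨ι c * t ^ e, fun k hk => ?_⟩
  have h := congr($(P.coeff_monomial_mul c e y) ((k - e) + e))
  rw [Finsupp.sum_single_add_apply _ _ (fun _ => by simp), Nat.sub_add_cancel (by omega)] at h
  rw [map_sub, Finsupp.sub_apply, h, sub_eq_zero]
  rcases hk.eq_or_lt with rfl | hk
  · rw [show deg coeff x - e = deg coeff y by omega, inv_mul_cancel_right₀ hc]
  · rw [coeff_eq_zero_of_deg_lt hk, coeff_eq_zero_of_deg_lt (show deg coeff y < k - e by omega),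
      map_zero, mul_zero]

lemma exists_eq_mul_add (x : R) {y : R} (hy : y ≠ 0) :
    ∃ q r : R, x = q * y + r ∧ (r = 0 ∨ deg coeff r < deg coeff y) := by
  induction hd : deg coeff x using Nat.strong_induction_on generalizing x with
  | _ d ih =>
  by_cases hlt : deg coeff x < deg coeff y
  · exact ⟨0, x, by rw [zero_mul, zero_add], Or.inr hlt⟩
  obtain ⟨m, hm⟩ := P.exists_coeff_sub_mul_eq_zero x hy (not_lt.mp hlt)
  by_cases h0 : x - m * y = 0
  · exact ⟨m, 0, by rw [add_zero, ← sub_eq_zero, h0], Or.inl rfl⟩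
  obtain ⟨q, r, hqr, hr⟩ :=
    ih _ (hd ▸ P.deg_lt_of_forall_coeff_eq_zero h0 hm) (x - m * y) rfl
  exact ⟨m + q, r, by rw [add_mul, add_assoc, ← hqr, add_sub_cancel], hr⟩

lemma isPrincipalIdealRing : IsPrincipalIdealRing R := by
  refine ⟨fun J => ?_⟩
  by_cases hJ : J = ⊥
  · rw [hJ]; infer_instance
  obtain ⟨x₀, hx₀J, hx₀⟩ := (Submodule.ne_bot_iff J).mp hJ
  obtain ⟨d, ⟨hdJ, hd⟩, hmin⟩ := (InvImage.wf (deg coeff) wellFounded_lt).has_min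
    {x | x ∈ J ∧ x ≠ 0} ⟨x₀, hx₀J, hx₀⟩
  refine ⟨d, le_antisymm (fun x hx => ?_) (Submodule.span_le.mpr (by simpa using hdJ))⟩
  obtain ⟨q, r, rfl, hr⟩ := P.exists_eq_mul_add x hd
  have hrJ : r ∈ J := by simpa using J.sub_mem hx (J.smul_mem q hdJ)
  rcases hr with rfl | hr
  · exact Submodule.mem_span_singleton.mpr ⟨q, by rw [add_zero, smul_eq_mul]⟩
  · by_cases hr0 : r = 0
    · exact Submodule.mem_span_singleton.mpr ⟨q, by rw [hr0, add_zero, smul_eq_mul]⟩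
    · exact absurd hr (hmin r ⟨hrJ, hr0⟩)

lemma exists_monic_generator (J : Ideal R) (hJ : J ≠ ⊥) :
    ∃ d : R, coeff d (deg coeff d) = 1 ∧ J = Submodule.span R {d} := by
  have := P.isDomain
  obtain ⟨d, rfl⟩ := (P.isPrincipalIdealRing.principal J).principal
  have hd : d ≠ 0 := by rintro rfl; simp at hJ
  have hc := P.coeff_deg_ne_zero hd
  refine ⟨ι (coeff d (deg coeff d))⁻¹ * d, ?_, ?_⟩
  · rw [P.deg_mul ((map_ne_zero ι).mpr (inv_ne_zero hc)) hd, P.deg_iota, zero_add,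
      P.coeff_iota_mul, inv_mul_cancel₀ hc]
  · exact (Submodule.span_singleton_smul_eq ((IsUnit.mk0 _ (inv_ne_zero hc)).map ι) d).symm

lemma exists_eq_mul_t {x : R} (hx : coeff x 0 = 0) : ∃ y, x = y * t := by
  obtain ⟨q, r, rfl, hr⟩ := P.exists_eq_mul_add x P.t_ne_zero
  refine ⟨q, ?_⟩
  suffices r = 0 by rw [this, add_zero]
  rcases hr with hr | hr
  · exact hr
  rw [P.deg_t, Nat.lt_one_iff] at hr
  rw [map_add, Finsupp.add_apply, P.coeff_mul_t_zero, zero_add] at hx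
  rw [P.eq_iota_of_deg_eq_zero hr, hx, map_zero]

lemma coeff_evalTPow (p : F[X]) :
    coeff (evalTPow ι t n p) = p.sum fun k a => Finsupp.single (n * k) (algebraMap F K a) := by
  rw [evalTPow_eq_sum, Polynomial.sum, map_sum]
  exact Finset.sum_congr rfl fun k _ => P.coeff_monomial _ _

lemma coeff_evalTPow_mul (hn : 0 < n) (p : F[X]) (k : ℕ) :
    coeff (evalTPow ι t n p) (n * k) = algebraMap F K (p.coeff k) := by
  classical
  rw [P.coeff_evalTPow, Polynomial.sum, Finset.sum_apply']
  simp only [Finsupp.single_apply, Nat.mul_left_cancel_iff hn, Finset.sum_ite_eq',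
    Polynomial.mem_support_iff]
  split_ifs with h
  · rfl
  · rw [not_ne_iff.mp h, map_zero]

lemma coeff_evalTPow_of_not_dvd (p : F[X]) {m : ℕ} (hm : ¬n ∣ m) :
    coeff (evalTPow ι t n p) m = 0 := by
  rw [P.coeff_evalTPow, Polynomial.sum, Finset.sum_apply']
  exact Finset.sum_eq_zero fun k _ => Finsupp.single_eq_of_ne fun h => hm ⟨k, h⟩

lemma deg_evalTPow (hn : 0 < n) {p : F[X]} (hp : p ≠ 0) :
    deg coeff (evalTPow ι t n p) = n * p.natDegree := by
  have hlc : coeff (evalTPow ι t n p) (n * p.natDegree) ≠ 0 := by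
    rw [P.coeff_evalTPow_mul hn, ← Polynomial.leadingCoeff,
      map_ne_zero_iff _ (algebraMap F K).injective]
    exact leadingCoeff_ne_zero.mpr hp
  refine le_antisymm (Finset.sup_le fun m hm => ?_) (le_deg hlc)
  have hm := Finsupp.mem_support_iff.mp hm
  obtain ⟨k, rfl⟩ : n ∣ m := not_not.mp fun h => hm (P.coeff_evalTPow_of_not_dvd p h)
  rw [P.coeff_evalTPow_mul hn, map_ne_zero_iff _ (algebraMap F K).injective] at hm
  exact Nat.mul_le_mul_left n (le_natDegree_of_ne_zero hm)

lemma evalTPow_ne_zero (hn : 0 < n) {p : F[X]} (hp : p ≠ 0) : evalTPow ι t n p ≠ 0 := by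
  intro h
  have := P.coeff_evalTPow_mul hn p p.natDegree
  rw [h, map_zero, Finsupp.zero_apply, eq_comm, map_eq_zero_iff _ (algebraMap F K).injective,
    ← Polynomial.leadingCoeff, leadingCoeff_eq_zero] at this
  exact hp this

lemma evalTPow_mul (hσn : σ ^ n = 1) (p q : F[X]) :
    evalTPow ι t n (p * q) = evalTPow ι t n p * evalTPow ι t n q := by
  have hcomm (a : F) : Commute ((ι.comp (algebraMap F K)) a) (t ^ n) := by
    simp [Commute, SemiconjBy, P.t_pow_mul, hσn]
  exact map_mul (eval₂RingHom' _ _ hcomm) p q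

lemma exists_evalTPow_eq (hn : 0 < n) {d : R} (hdvd : ∀ k, coeff d k ≠ 0 → n ∣ k)
    (hF : ∀ k, coeff d k ∈ Set.range (algebraMap F K)) :
    ∃ p : F[X], evalTPow ι t n p = d := by
  classical
  set g := Function.invFun (algebraMap F K)
  have hg (a : K) (ha : a ∈ Set.range (algebraMap F K)) : algebraMap F K (g a) = a :=
    Function.invFun_eq ha
  have hg0 : g 0 = 0 := (algebraMap F K).injective (by rw [hg 0 ⟨0, map_zero _⟩, map_zero])
  let p : F[X] := ⟨.ofCoeff <| (Finsupp.comapDomain (n * ·) (coeff d)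
    (mul_right_injective₀ hn.ne').injOn).mapRange g hg0⟩
  refine ⟨p, P.coeff_injective (Finsupp.ext fun m => ?_)⟩
  by_cases hm : n ∣ m
  · obtain ⟨j, rfl⟩ := hm
    rw [P.coeff_evalTPow_mul hn]
    simp [p, coeff_ofFinsupp, hg _ (hF _)]
  · rw [P.coeff_evalTPow_of_not_dvd _ hm]
    exact (not_ne_iff.mp (mt (hdvd m) hm)).symm

lemma dvd_of_evalTPow_mem_span (hn : 0 < n) (hσn : σ ^ n = 1) {p q : F[X]} (hp : p.Monic)
    (h : evalTPow ι t n q ∈ Submodule.span R {evalTPow ι t n p}) : p ∣ q := by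
  have := P.isDomain
  obtain ⟨e, he⟩ := Submodule.mem_span_singleton.mp h
  rw [← modByMonic_eq_zero_iff_dvd hp]
  by_contra hr
  have hq : evalTPow ι t n q = evalTPow ι t n (q %ₘ p) + evalTPow ι t n (q /ₘ p * p) := by
    simp only [evalTPow, ← eval₂_add, mul_comm _ p, modByMonic_add_div]
  have hrem :
      evalTPow ι t n (q %ₘ p) = (e - evalTPow ι t n (q /ₘ p)) * evalTPow ι t n p := by
    rw [sub_mul, ← smul_eq_mul, he, hq, P.evalTPow_mul hσn]
    abel
  have hlt := (Nat.mul_lt_mul_left hn).mpr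
    (natDegree_lt_natDegree hr (degree_modByMonic_lt q hp))
  rw [← P.deg_evalTPow hn hr, ← P.deg_evalTPow hn hp.ne_zero, hrem] at hlt
  have hne : e - evalTPow ι t n (q /ₘ p) ≠ 0 := by
    rintro h0; rw [h0, zero_mul] at hrem; exact P.evalTPow_ne_zero hn hr hrem
  rw [P.deg_mul hne (P.evalTPow_ne_zero hn hp.ne_zero)] at hlt
  omega

lemma pow_apply_eq_of_mul_iota_mem {d : R} (hd0 : coeff d 0 ≠ 0) (a : K)
    (h : d * ι a ∈ Submodule.span R {d}) {k : ℕ} (hk : coeff d k ≠ 0) : (σ ^ k) a = a := by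
  have := P.isDomain
  have hd : d ≠ 0 := by rintro rfl; simp at hd0
  rcases eq_or_ne a 0 with rfl | ha
  · rw [map_zero]
  obtain ⟨w, hw⟩ := Submodule.mem_span_singleton.mp h
  rw [smul_eq_mul] at hw
  have hw0 : w ≠ 0 := by
    rintro rfl
    exact mul_ne_zero hd ((map_ne_zero ι).mpr ha) (by rw [← hw, zero_mul])
  have hdeg : deg coeff w = 0 := by
    have := congrArg (deg coeff) hw
    rw [P.deg_mul hw0 hd, P.deg_mul hd ((map_ne_zero ι).mpr ha), P.deg_iota] at this
    omega
  rw [P.eq_iota_of_deg_eq_zero hdeg] at hw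
  have hcoeff (m : ℕ) : coeff w 0 * coeff d m = coeff d m * (σ ^ m) a := by
    rw [← P.coeff_iota_mul, hw, P.coeff_mul_iota]
  have hc : coeff w 0 = a := mul_right_cancel₀ hd0 (by simpa [mul_comm] using hcoeff 0)
  exact mul_left_cancel₀ hk (by rw [← hcoeff, hc, mul_comm])

lemma apply_coeff_eq_of_mul_t_mem {d : R} (hd1 : coeff d (deg coeff d) = 1)
    (hd0 : coeff d 0 ≠ 0) (h : d * t ∈ Submodule.span R {d}) (k : ℕ) :
    σ (coeff d k) = coeff d k := by
  have := P.isDomain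
  have hd : d ≠ 0 := by rintro rfl; simp at hd0
  obtain ⟨w, hw⟩ := Submodule.mem_span_singleton.mp h
  rw [smul_eq_mul] at hw
  have hw0 : coeff w 0 = 0 := by
    have := P.coeff_mul_zero w d
    rw [hw, P.coeff_mul_t_zero] at this
    exact (mul_eq_zero.mp this.symm).resolve_right hd0
  obtain ⟨v, rfl⟩ := P.exists_eq_mul_t hw0
  have hv : v ≠ 0 := by
    rintro rfl
    exact mul_ne_zero hd P.t_ne_zero (by rw [← hw, zero_mul, zero_mul])
  have hdeg : deg coeff v = 0 := by
    have := congrArg (deg coeff) hw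
    rw [P.deg_mul (mul_ne_zero hv P.t_ne_zero) hd, P.deg_mul hv P.t_ne_zero,
      P.deg_mul hd P.t_ne_zero] at this
    omega
  rw [P.eq_iota_of_deg_eq_zero hdeg, mul_assoc] at hw
  have hcoeff (m : ℕ) : coeff v 0 * σ (coeff d m) = coeff d m := by
    rw [← P.coeff_t_mul_succ, ← P.coeff_iota_mul, hw, P.coeff_mul_t_succ]
  have hc : coeff v 0 = 1 := by simpa [hd1] using hcoeff (deg coeff d)
  simpa [hc] using hcoeff k

lemma exists_monic_evalTPow_eq (hn : 0 < n) (hord : orderOf σ = n)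
    (hfix : ∀ a : K, σ a = a → a ∈ Set.range (algebraMap F K)) {d : R}
    (hd1 : coeff d (deg coeff d) = 1) (hd0 : coeff d 0 ≠ 0)
    [Ideal.IsTwoSided (Submodule.span R {d})] :
    ∃ p : F[X], p.Monic ∧ evalTPow ι t n p = d := by
  have hJ (r : R) : d * r ∈ Submodule.span R {d} :=
    Ideal.mul_mem_right r _ (Submodule.mem_span_singleton_self d)
  have hdvd (k : ℕ) (hk : coeff d k ≠ 0) : n ∣ k := hord ▸ orderOf_dvd_of_pow_eq_one
    (AlgEquiv.ext fun a => P.pow_apply_eq_of_mul_iota_mem hd0 a (hJ _) hk)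
  obtain ⟨p, rfl⟩ := P.exists_evalTPow_eq hn hdvd
    fun k => hfix _ (P.apply_coeff_eq_of_mul_t_mem hd1 hd0 (hJ t) k)
  have hp : p ≠ 0 := by rintro rfl; simp [evalTPow] at hd0
  refine ⟨p, (algebraMap F K).injective ?_, rfl⟩
  rw [leadingCoeff, ← P.coeff_evalTPow_mul hn, ← P.deg_evalTPow hn hp, hd1, map_one]

theorem eq_span_evalTPow_of_isTwoSided (hn : 0 < n) (hord : orderOf σ = n)
    (hfix : ∀ a : K, σ a = a → a ∈ Set.range (algebraMap F K)) {hhat : F[X]}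
    (hmonic : hhat.Monic) (hirr : Irreducible hhat) (hc0 : hhat.coeff 0 ≠ 0)
    (J : Ideal R) [J.IsTwoSided] (hJ : evalTPow ι t n hhat ∈ J) (hJtop : J ≠ ⊤) :
    J = Submodule.span R {evalTPow ι t n hhat} := by
  have := P.isDomain
  have hh0 := P.evalTPow_ne_zero hn hmonic.ne_zero
  obtain ⟨d, hd1, rfl⟩ := P.exists_monic_generator J fun h => hh0 (by simpa [h] using hJ)
  have hd0 : coeff d 0 ≠ 0 := by
    obtain ⟨e, he⟩ := Submodule.mem_span_singleton.mp hJ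
    have := P.coeff_evalTPow_mul hn hhat 0
    rw [mul_zero, ← he, smul_eq_mul, P.coeff_mul_zero] at this
    exact right_ne_zero_of_mul (this ▸ (map_ne_zero_iff _ (algebraMap F K).injective).mpr hc0)
  obtain ⟨p, hp, rfl⟩ := P.exists_monic_evalTPow_eq hn hord hfix hd1 hd0
  have hpu : ¬IsUnit p := fun hu => hJtop <| by
    rw [hp.eq_one_of_isUnit hu, evalTPow, eval₂_one]
    exact Ideal.eq_top_of_isUnit_mem _ (Submodule.mem_span_singleton_self 1) isUnit_one
  obtain ⟨r, hr⟩ := P.dvd_of_evalTPow_mem_span hn (hord ▸ pow_orderOf_eq_one σ) hp hJ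
  rw [eq_of_monic_of_associated hp hmonic
    ⟨((hirr.isUnit_or_isUnit hr).resolve_left hpu).unit, hr.symm⟩]

lemma exists_prod_eq_of_not_isUnit {x : R} (hx : x ≠ 0) (hxu : ¬IsUnit x) :
    ∃ l : List R, l.prod = x ∧ ∀ y ∈ l, Irreducible y := by
  have := P.isDomain
  induction hd : deg coeff x using Nat.strong_induction_on generalizing x with
  | _ d ih =>
  by_cases hirr : Irreducible x
  · exact ⟨[x], List.prod_singleton, by simpa using hirr⟩
  obtain ⟨a, b, rfl, ha, hb⟩ : ∃ a b, x = a * b ∧ ¬IsUnit a ∧ ¬IsUnit b := by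
    simpa [irreducible_iff, hxu] using hirr
  have ha0 := left_ne_zero_of_mul hx
  have hb0 := right_ne_zero_of_mul hx
  have hda := (P.isUnit_iff_deg_eq_zero ha0).not.mp ha
  have hdb := (P.isUnit_iff_deg_eq_zero hb0).not.mp hb
  rw [P.deg_mul ha0 hb0] at hd
  obtain ⟨la, rfl, hla⟩ := ih _ (by omega) ha0 ha rfl
  obtain ⟨lb, rfl, hlb⟩ := ih _ (by omega) hb0 hb rfl
  exact ⟨la ++ lb, List.prod_append, fun y hy => (List.mem_append.mp hy).elim (hla y) (hlb y)⟩

lemma isUnit_of_mul_eq_t_pow {f g : R} (hf : coeff f 0 ≠ 0) {k : ℕ} (h : f * g = t ^ k) :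
    IsUnit f := by
  have := P.isDomain
  induction k generalizing g with
  | zero => exact IsUnit.of_mul_eq_one g (by rw [h, pow_zero])
  | succ k ih =>
    have hg0 : coeff g 0 = 0 := by
      have := P.coeff_mul_zero f g
      rw [h, pow_succ, P.coeff_mul_t_zero] at this
      exact (mul_eq_zero.mp this.symm).resolve_left hf
    obtain ⟨g', rfl⟩ := P.exists_eq_mul_t hg0
    exact ih (mul_right_cancel₀ P.t_ne_zero (by rw [mul_assoc, h, pow_succ]))

lemma coeff_zero_ne_zero_of_exists_mul_add_mul_t_eq_one {f g : R} {hhat : F[X]}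
    (hmonic : hhat.Monic) (hirr : Irreducible hhat) (hgcrd : ∃ a b : R, a * f + b * t = 1)
    (hfu : ¬IsUnit f) (hcen : evalTPow ι t n hhat ∈ Subring.center R)
    (hg : evalTPow ι t n hhat = g * f) : hhat.coeff 0 ≠ 0 := by
  have := P.isDomain
  intro h0
  rw [eq_X_of_irreducible_of_coeff_zero_eq_zero hmonic hirr h0, evalTPow, eval₂_X] at hcen hg
  have hf0 : coeff f 0 ≠ 0 := by
    obtain ⟨a, b, hab⟩ := hgcrd
    intro hf0
    have := congr(coeff $hab 0)
    rw [map_add, Finsupp.add_apply, P.coeff_mul_zero, P.coeff_mul_t_zero, hf0, P.coeff_one] at this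
    simp at this
  exact hfu (P.isUnit_of_mul_eq_t_pow hf0 (by rw [mul_comm_of_mul_mem_center (hg ▸ hcen), hg]))

theorem nonempty_linearEquiv_of_irreducible_of_mem_span (hn : 0 < n) (hord : orderOf σ = n)
    (hfix : ∀ a : K, σ a = a → a ∈ Set.range (algebraMap F K)) {hhat : F[X]}
    (hmonic : hhat.Monic) (hirr : Irreducible hhat) (hc0 : hhat.coeff 0 ≠ 0)
    (hcen : evalTPow ι t n hhat ∈ Subring.center R) {p q : R} (hp : Irreducible p)
    (hq : Irreducible q) (hhp : evalTPow ι t n hhat ∈ Submodule.span R {p})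
    (hhq : evalTPow ι t n hhat ∈ Submodule.span R {q}) :
    Nonempty ((R ⧸ Submodule.span R {p}) ≃ₗ[R] (R ⧸ Submodule.span R {q})) := by
  have := P.isDomain
  have := P.isPrincipalIdealRing
  have hcoatom {z : R} (hz : Irreducible z) := isCoatom_span_singleton_of_irreducible hz
  have := isSimpleModule_iff_isCoatom.mpr (hcoatom hp)
  have := isSimpleModule_iff_isCoatom.mpr (hcoatom hq)
  obtain ⟨c, hc⟩ := Submodule.mem_span_singleton.mp hhp
  rw [smul_eq_mul] at hc
  have hpc : p * c = evalTPow ι t n hhat := by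
    rw [← hc, mul_comm_of_mul_mem_center (hc ▸ hcen)]
  have hann := P.eq_span_evalTPow_of_isTwoSided hn hord hfix hmonic hirr hc0 _
    (mem_annihilator_quotient_of_mem_center hcen hhq) (annihilator_quotient_ne_top (hcoatom hq).1)
  refine nonempty_linearEquiv_of_mul_mem_annihilator (a := p) (b := c)
    (by rw [hann, ← hpc]; exact Submodule.mem_span_singleton_self _) fun hcm => hp.not_isUnit ?_
  obtain ⟨v, hv⟩ := Submodule.mem_span_singleton.mp (hann ▸ hcm)
  have hcne : c ≠ 0 := by
    rintro rfl; exact P.evalTPow_ne_zero hn hmonic.ne_zero (by rw [← hc, zero_mul])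
  refine IsUnit.of_mul_eq_one_right v (mul_right_cancel₀ hcne ?_)
  rw [one_mul, mul_assoc, hpc, ← smul_eq_mul, hv]

end IsSkewPolynomialRing

/-- If `f ∈ R = K[t;σ]` satisfies `gcrd(f,t) = 1` and its minimal central left
multiple `h(t) = ĥ(t^n)` has `ĥ ∈ F[x]` irreducible, then `f = f₁⋯f_r` with each
`f_i` irreducible in `R` and all the `f_i` pairwise similar. -/
theorem factorization_into_similar_irreducibles
    (F K : Type) [Field F] [Field K] [Algebra F K] [IsGalois F K]
    (n : ℕ) (hn : 0 < n) (hdim : Module.finrank F K = n)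
    (σ : K ≃ₐ[F] K) (hσgen : ∀ τ : K ≃ₐ[F] K, τ ∈ Subgroup.zpowers σ)
    (R : Type) [Ring R] (ι : K →+* R) (t : R)
    (hmul : ∀ a : K, t * ι a = ι (σ a) * t)
    (coeff : R →+ (ℕ →₀ K))
    (hcoeff : ∀ (a : K) (i : ℕ), coeff (ι a * t ^ i) = Finsupp.single i a)
    (hrepr : ∀ x : R, (coeff x).sum (fun i a => ι a * t ^ i) = x)
    (f : R)
    -- gcrd(f,t) = 1 (Bézout in the right-Euclidean domain R):
    (hgcrd : ∃ p q : R, p * f + q * t = 1)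
    (hhat : Polynomial F) (hmonic : hhat.Monic) (hirr : Irreducible hhat)
    -- h(t) = ĥ(t^n) is the minimal central left multiple of f:
    (hleft : ∃ g : R, (hhat.sum fun k a => ι (algebraMap F K a) * t ^ (n * k)) = g * f)
    (hcentral : (hhat.sum fun k a => ι (algebraMap F K a) * t ^ (n * k)) ∈ Subring.center R)
    (hminimal : ∀ c : R, c ∈ Subring.center R → c ≠ 0 → (∃ g : R, c = g * f) →
      (coeff (hhat.sum fun k a => ι (algebraMap F K a) * t ^ (n * k))).support.sup id ≤
        (coeff c).support.sup id) :
    ∃ (r : ℕ) (fs : Fin r → R),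
      f = (List.ofFn fs).prod ∧
      (∀ i, Irreducible (fs i)) ∧
      (∀ i j, Nonempty ((R ⧸ Submodule.span R ({fs i} : Set R)) ≃ₗ[R]
        (R ⧸ Submodule.span R ({fs j} : Set R)))) := by
  have P : IsSkewPolynomialRing σ ι t coeff := ⟨hmul, hcoeff, hrepr⟩
  have := P.isDomain
  have : FiniteDimensional F K := Module.finite_of_finrank_pos (hdim ▸ hn)
  have hord : orderOf σ = n := hdim ▸ orderOf_eq_finrank_of_forall_mem_zpowers hσgen
  have hfix (a : K) := mem_range_algebraMap_of_forall_mem_zpowers hσgen (a := a)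
  simp only [← evalTPow_eq_sum] at hleft hcentral hminimal
  obtain ⟨g, hg⟩ := hleft
  have hf : f ≠ 0 := by
    rintro rfl; exact P.evalTPow_ne_zero hn hmonic.ne_zero (by rw [hg, mul_zero])
  have hfu : ¬IsUnit f := fun ⟨u, hu⟩ => by
    have := hminimal 1 (Subring.one_mem _) one_ne_zero
      ⟨↑u⁻¹, by rw [← hu, Units.inv_mul]⟩
    change IsSkewPolynomialRing.deg coeff _ ≤ IsSkewPolynomialRing.deg coeff _ at this
    rw [P.deg_evalTPow hn hmonic.ne_zero, ← map_one ι, P.deg_iota] at this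
    exact (Nat.mul_pos hn hirr.natDegree_pos).ne' (Nat.le_zero.mp this)
  have hc0 := P.coeff_zero_ne_zero_of_exists_mul_add_mul_t_eq_one hmonic hirr hgcrd hfu hcentral hg
  obtain ⟨l, rfl, hl⟩ := P.exists_prod_eq_of_not_isUnit hf hfu
  have hmem {x : R} (hx : x ∈ l) := mem_span_of_mem_prod hcentral hg hx
  refine ⟨l.length, l.get, by rw [List.ofFn_get], fun i => hl _ (l.get_mem i), fun i j => ?_⟩
  exact P.nonempty_linearEquiv_of_irreducible_of_mem_span hn hord hfix hmonic hirr hc0 hcentral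
    (hl _ (l.get_mem i)) (hl _ (l.get_mem j)) (hmem (l.get_mem i)) (hmem (l.get_mem j))
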